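/- Let (U→, ≤, *, ∨, ∧) be a universe of separations containing a separation system (S→, ≤, *) with the induced order and involution, and let F ⊆ 2^{U→} be a family of stars. Let (T, α) be a tight and irredundant S-tree over F with at least one edge, rooted at a leaf x with incident edge e_x→ oriented away from x. Assume that r := α(e_x→) is nontrivial in S→ and nondegenerate, let s0 ∈ S→ emulate r in S→ for F, and let α' := α_{x,s0}. Then (T, α') is an order-respecting S-tree over F ∪ {{s0*}}, in which the star {s0*} is associated with x but with no other leaf of T. -/

import Mathlib

/-!
Write `r := α x y`. Along a path in an irredundant tree over stars consecutive separations
increase, so every edge pointing away from `x` carries a separation `≥ r`; it cannot be `r*`,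
nor can `r` lie below its inverse as well, since then `r` would be trivial or `(T, α)` not
tight. Hence at every node `t ≠ x` the shift acts on the star of `t` as the shifting map
`f↓(r)(s0)`, which sends it into `F` because `s0` emulates `r`, while the star at `x` becomes
`{(r ⊔ s0)*} = {s0*}`. No other star is `{s0*}`: the edge `e` entering it would satisfy
`α e ≤ s0*`, putting `r ≤ s0` below both orientations of `α e`.
-/

open Classical

namespace SepDuality

section Defs

variable {D : Type*} [PartialOrder D] {V : Type*}

/-- `r` is trivial in the separation (sub)system `S`: some `s ∈ S` satisfies `r < s` and
`r < s*`. -/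
def TrivialIn (star : D → D) (S : Set D) (r : D) : Prop :=
  ∃ s ∈ S, r < s ∧ r < star s

/-- A star of separations: a set of nondegenerate oriented separations pointing
towards each other. -/
def IsStarSet (star : D → D) (σ : Set D) : Prop :=
  (∀ s ∈ σ, star s ≠ s) ∧ ∀ r ∈ σ, ∀ s ∈ σ, r ≠ s → r ≤ star s

/-- An orientation of (the unoriented separations underlying) `S`: it contains, for every
`s ∈ S`, exactly one of `s`, `s*`. -/
def IsOrientation (star : D → D) (S : Set D) (O : Set D) : Prop :=
  O ⊆ S ∧ (∀ s ∈ S, s ∈ O ∨ star s ∈ O) ∧ ∀ s ∈ O, star s ∈ O → star s = s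

/-- `O` avoids `F` if no subset of `O` lies in `F`. -/
def Avoids (O : Set D) (F : Set (Set D)) : Prop := ∀ σ ∈ F, ¬σ ⊆ O

/-- `O` is consistent: no two of its elements that are orientations of distinct separations
point away from each other. -/
def Consistent (star : D → D) (O : Set D) : Prop :=
  ∀ r s : D, r < s → star r ∈ O → s ∈ O → r = star s

/-- An `F`-tangle of `S`: a consistent orientation of `S` avoiding `F`. -/
def FTangle (star : D → D) (S : Set D) (F : Set (Set D)) (O : Set D) : Prop :=
  IsOrientation star S O ∧ Consistent star O ∧ Avoids O F

/-- An `S`-tree: a (finite) tree `T` together with `α` mapping its oriented edges to `S`,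
commuting with the involutions. -/
def IsSTree (star : D → D) (S : Set D) (T : SimpleGraph V) (α : V → V → D) : Prop :=
  T.Connected ∧ T.IsAcyclic ∧ (∀ x y : V, T.Adj x y → α x y ∈ S) ∧
    ∀ x y : V, T.Adj x y → α y x = star (α x y)

/-- The star `α(F→_t)` associated with a node `t`. -/
def starAt (T : SimpleGraph V) (α : V → V → D) (t : V) : Set D :=
  {d | ∃ x : V, T.Adj x t ∧ α x t = d}

/-- The `S`-tree `(T, α)` is over `F`. -/
def IsOver (T : SimpleGraph V) (α : V → V → D) (F : Set (Set D)) : Prop :=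
  ∀ t : V, starAt T α t ∈ F

/-- `x` is a leaf of `T`. -/
def IsLeaf (T : SimpleGraph V) (x : V) : Prop := ∃! y : V, T.Adj x y

/-- The natural strict partial order on oriented edges of a tree: `(x,y) < (u,v)` iff the
edges are distinct and the unique `{x,y}`–`{u,v}` path joins `y` to `u` (equivalently,
there is a path from `y` to `u` avoiding `x` and `v`). -/
def edgeLT (T : SimpleGraph V) (e f : V × V) : Prop :=
  ¬(e.1 = f.1 ∧ e.2 = f.2) ∧ ¬(e.1 = f.2 ∧ e.2 = f.1) ∧
    ∃ p : T.Walk e.2 f.1, p.IsPath ∧ e.1 ∉ p.support ∧ f.2 ∉ p.support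

/-- The natural partial order on oriented edges of a tree. -/
def edgeLE (T : SimpleGraph V) (e f : V × V) : Prop := e = f ∨ edgeLT T e f

/-- `(T, α)` is order-respecting. -/
def OrderRespecting (T : SimpleGraph V) (α : V → V → D) : Prop :=
  ∀ e f : V × V, T.Adj e.1 e.2 → T.Adj f.1 f.2 → edgeLE T e f →
    α e.1 e.2 ≤ α f.1 f.2

/-- `(T, α)` is irredundant. -/
def Irredundant (T : SimpleGraph V) (α : V → V → D) : Prop :=
  ∀ t t' t'' : V, T.Adj t' t → T.Adj t'' t → t' ≠ t'' → α t' t ≠ α t'' t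

/-- `(T, α)` is tight: every associated star is antisymmetric. -/
def Tight (star : D → D) (T : SimpleGraph V) (α : V → V → D) : Prop :=
  ∀ t : V, ∀ d ∈ starAt T α t, star d ≠ d → star d ∉ starAt T α t

/-- `(T, α)` is essential: irredundant, tight, and no `α(e)` is trivial in `S`. -/
def Essential (star : D → D) (S : Set D) (T : SimpleGraph V) (α : V → V → D) : Prop :=
  Irredundant T α ∧ Tight star T α ∧ ∀ x y : V, T.Adj x y → ¬TrivialIn star S (α x y)

/-- The essential core `F' = {σ \ S⁻ : σ ∈ F}` of `F`, where `S⁻` is the set of separations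
trivial in `S`. -/
def essentialCore (star : D → D) (S : Set D) (F : Set (Set D)) : Set (Set D) :=
  (fun σ => σ \ {r : D | TrivialIn star S r}) '' F

/-- `T'` (a tree on the vertex set `V' ⊆ V`) is a minor of the tree `T`: it is obtained
from a subtree of `T` (the union of the branch sets) by contracting the branch sets. -/
def TreeMinor (T : SimpleGraph V) (V' : Set V) (T' : SimpleGraph V') : Prop :=
  ∃ B : V' → Set V,
    (∀ a : V', (a : V) ∈ B a) ∧
    (∀ a b : V', a ≠ b → Disjoint (B a) (B b)) ∧
    (∀ a : V', (T.induce (B a)).Connected) ∧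
    ∀ a b : V', a ≠ b → (T'.Adj a b ↔ ∃ u ∈ B a, ∃ v ∈ B b, T.Adj u v)

/-- `F` forces `s` if `{s*} ∈ F`. -/
def Forces (star : D → D) (F : Set (Set D)) (s : D) : Prop :=
  ({star s} : Set D) ∈ F

/-- `F` is standard for `S`: it forces every separation trivial in `S`. -/
def StandardFor (star : D → D) (S : Set D) (F : Set (Set D)) : Prop :=
  ∀ r ∈ S, TrivialIn star S r → Forces star F r

section UniverseOfSeparations

variable {U : Type*} [Lattice U]

/-- `s0` emulates `r` in `S`. -/
def EmulatesIn (star : U → U) (S : Set U) (r s0 : U) : Prop :=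
  r ≤ s0 ∧ ∀ s ∈ S, s ≠ star r → r ≤ s → s ⊔ s0 ∈ S

/-- The shifting map `f↓(r)(s0)`: it sends each `s ≥ r` with `s ≠ r*` to `s ⊔ s0`, and
the inverse `s*` of such an `s` to `(s ⊔ s0)*`. -/
noncomputable def shiftFun (star : U → U) (r s0 t : U) : U :=
  if r ≤ t ∧ t ≠ star r then t ⊔ s0 else star (star t ⊔ s0)

/-- `S→_{≥ r}`: the set of orientations of separations in `S` having an orientation `≥ r`. -/
def SgeR (star : U → U) (S : Set U) (r : U) : Set U :=
  {s ∈ S | r ≤ s ∨ r ≤ star s}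

/-- `s0` emulates `r` in `S` for `F`. -/
def EmulatesFor (star : U → U) (S : Set U) (F : Set (Set U)) (r s0 : U) : Prop :=
  EmulatesIn star S r s0 ∧
    ∀ σ ∈ F, σ ⊆ SgeR star S r \ {star r} → (∃ s ∈ σ, r ≤ s) →
      shiftFun star r s0 '' σ ∈ F

/-- `S` is `F`-separable. -/
def FSeparable (star : U → U) (S : Set U) (F : Set (Set U)) : Prop :=
  ∀ r ∈ S, ∀ r' ∈ S,
    ¬TrivialIn star S r → ¬TrivialIn star S r' →
    star r ≠ r → star r' ≠ r' →
    ¬Forces star F r → ¬Forces star F r' → r ≤ r' →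
    ∃ s0 ∈ S, EmulatesFor star S F r s0 ∧ EmulatesFor star S F r' (star s0)

/-- The shift `α_{x,s0}` of `α` in an `S`-tree rooted at the leaf `x` (with unique
neighbour `y`): edges `e ≥ e_x→ = (x,y)` are mapped to `α(e) ⊔ s0`, their reversals
to `(α(e) ⊔ s0)*`. -/
noncomputable def shiftAlpha (star : U → U) (T : SimpleGraph V)
    (x y : V) (s0 : U) (α : V → V → U) (a b : V) : U :=
  if edgeLE T (x, y) (a, b) then α a b ⊔ s0 else star (α b a ⊔ s0)

end UniverseOfSeparations

end Defs

section EdgeOrder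

open SimpleGraph

variable {V : Type*} {T : SimpleGraph V} {x y : V}

lemma edgeLT_induction (P : V → V → Prop)
    (hstep : ∀ a b w, T.Adj a b → T.Adj b w → a ≠ w → P a b → P b w)
    {a b c d : V} (hab : T.Adj a b) (hcd : T.Adj c d) (h : edgeLT T (a, b) (c, d))
    (ha : P a b) : P c d := by
  obtain ⟨-, hne, p, hp, hap, hdp⟩ := h
  suffices ∀ {b : V} (p : T.Walk b c), T.Adj c d → p.IsPath → ∀ {a : V}, T.Adj a b →
      a ∉ p.support → d ∉ p.support → ¬(a = d ∧ b = c) → P a b → P c d from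
    this p hcd hp hab hap hdp hne ha
  clear hab hcd hne hp hap hdp ha p
  intro b p
  induction p with
  | nil =>
    exact fun hcd _ a hab _ _ hne ha => hstep a _ d hab hcd (fun had => hne ⟨had, rfl⟩) ha
  | @cons b w c hbw q ih =>
    intro hcd hp a hab hap hdp _ ha
    rw [Walk.cons_isPath_iff] at hp
    rw [Walk.support_cons, List.mem_cons, not_or] at hap hdp
    have haw : a ≠ w := fun h => hap.2 (h ▸ q.start_mem_support)
    exact ih hcd hp.1 hbw hp.2 hdp.2 (fun h => hdp.1 h.1.symm) (hstep a b w hab hbw haw ha)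

lemma notMem_support_of_leaf (hleaf : ∀ z : V, T.Adj x z → z = y) :
    ∀ {u v : V} (p : T.Walk u v), p.IsPath → u ≠ x → v ≠ x → x ∉ p.support := by
  intro u v p
  induction p with
  | nil =>
    intro _ hu _
    simpa using Ne.symm hu
  | @cons a b c hab q ih =>
    intro hp ha hc hx
    rw [Walk.cons_isPath_iff] at hp
    rw [Walk.support_cons, List.mem_cons] at hx
    rcases hx with hx | hx
    · exact ha hx.symm
    rcases eq_or_ne b x with rfl | hb
    · cases q with
      | nil => exact hc rfl
      | cons hbz q' =>
        -- both `a` and the vertex after `x` are the unique neighbour `y` of `x`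
        rw [hleaf a hab.symm, ← hleaf _ hbz] at hp
        exact hp.2 (by simp)
    · exact ih hp.1 hb hc hx

lemma edgeLE_root_or_swap (hconn : T.Connected) (hac : T.IsAcyclic) (hxy : T.Adj x y)
    (hleaf : ∀ z : V, T.Adj x z → z = y) {a b : V} (hab : T.Adj a b) :
    edgeLE T (x, y) (a, b) ∨ edgeLE T (x, y) (b, a) := by
  by_cases hax : a = x
  · subst hax
    exact Or.inl (Or.inl (by rw [hleaf b hab]))
  by_cases hbx : b = x
  · subst hbx
    exact Or.inr (Or.inl (by rw [hleaf a hab.symm]))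
  obtain ⟨p, hp⟩ := (hconn.preconnected y a).exists_isPath
  have hxp : x ∉ p.support := notMem_support_of_leaf hleaf p hp hxy.ne' hax
  by_cases hbp : b ∈ p.support
  · exact Or.inr (Or.inr ⟨fun h => hbx h.1.symm, fun h => hax h.1.symm, p.takeUntil b hbp,
      hp.takeUntil hbp, fun h => hxp (p.support_takeUntil_subset_support hbp h),
      hac.ne_mem_support_of_support_of_adj_of_isPath hp (hp.takeUntil hbp) hab hbp⟩)
  · exact Or.inl (Or.inr ⟨fun h => hax h.1.symm, fun h => hbx h.1.symm, p, hp, hxp, hbp⟩)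

lemma not_edgeLE_root_and_swap (hac : T.IsAcyclic) (hxy : T.Adj x y) {a b : V}
    (hab : T.Adj a b) (h : edgeLE T (x, y) (a, b)) (h' : edgeLE T (x, y) (b, a)) : False := by
  rcases h with h | ⟨-, hne, p, hp, -, hbp⟩ <;> rcases h' with h' | ⟨-, hne', q, hq, -, haq⟩
  · simp only [Prod.mk.injEq] at h h'
    exact hxy.ne (h.1.trans h'.2.symm)
  · exact hne' (Prod.mk.inj h)
  · exact hne (Prod.mk.inj h')
  · exact hbp (hac.mem_support_of_ne_mem_support_of_adj_of_isPath hp hq hab haq)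

lemma edgeLE_root_swap_iff (hconn : T.Connected) (hac : T.IsAcyclic) (hxy : T.Adj x y)
    (hleaf : ∀ z : V, T.Adj x z → z = y) ⦃a b : V⦄ (hab : T.Adj a b) :
    edgeLE T (x, y) (b, a) ↔ ¬edgeLE T (x, y) (a, b) :=
  ⟨fun h' h => not_edgeLE_root_and_swap hac hxy hab h h',
    (edgeLE_root_or_swap hconn hac hxy hleaf hab).resolve_left⟩

lemma edgeLE_root_of_adj_of_adj (hac : T.IsAcyclic) (hleaf : ∀ z : V, T.Adj x z → z = y)
    {a b w : V} (hab : T.Adj a b) (hbw : T.Adj b w) (haw : a ≠ w)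
    (h : edgeLE T (x, y) (a, b)) : edgeLE T (x, y) (b, w) := by
  right
  rcases h with h | ⟨-, hne, p, hp, hxp, hbp⟩
  · obtain ⟨rfl, rfl⟩ : x = a ∧ y = b := Prod.mk.inj h
    exact ⟨fun h => hab.ne h.1, fun h => haw h.1, Walk.nil, Walk.IsPath.nil,
      by simpa using hab.ne, by simpa using hbw.ne'⟩
  · have hbx : b ≠ x := fun h => hne ⟨h.symm, (hleaf a (h ▸ hab.symm)).symm⟩
    have hwp : w ∉ p.support := fun hw => haw <| by
      simpa using (hac.eq_penultimate_of_adj_end (hp.concat hbp hab) hbw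
        (by simp [Walk.support_concat, hw])).symm
    have hyb : y ≠ b := fun h => hbp (by subst h; exact p.start_mem_support)
    exact ⟨fun h => hbx h.1.symm, fun h => hyb h.2, p.concat hab, hp.concat hbp hab,
      by simp [Walk.support_concat, hxp, hbx.symm], by simp [Walk.support_concat, hwp, hbw.ne']⟩

lemma edgeLE_root_of_edgeLT (hac : T.IsAcyclic) (hleaf : ∀ z : V, T.Adj x z → z = y)
    {a b c d : V} (hab : T.Adj a b) (hcd : T.Adj c d) (h : edgeLE T (x, y) (a, b))
    (h' : edgeLT T (a, b) (c, d)) : edgeLE T (x, y) (c, d) :=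
  edgeLT_induction (fun a b => edgeLE T (x, y) (a, b))
    (fun _ _ _ hab hbw haw => edgeLE_root_of_adj_of_adj hac hleaf hab hbw haw) hab hcd h' h

lemma exists_edgeLE_root_into (hconn : T.Connected) (hxy : T.Adj x y)
    (hleaf : ∀ z : V, T.Adj x z → z = y) {t : V} (ht : t ≠ x) :
    ∃ u : V, T.Adj u t ∧ edgeLE T (x, y) (u, t) := by
  obtain ⟨p, hp⟩ := (hconn.preconnected t y).exists_isPath
  cases p with
  | nil => exact ⟨x, hxy, Or.inl rfl⟩
  | @cons _ u _ htu q =>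
    rw [Walk.cons_isPath_iff] at hp
    have hux : u ≠ x := by
      rintro rfl
      obtain rfl := hleaf t htu.symm
      exact hp.2 q.end_mem_support
    have hxq : x ∉ q.support := notMem_support_of_leaf hleaf q hp.1 hux hxy.ne'
    exact ⟨u, htu.symm, Or.inr ⟨fun h => hux h.1.symm, fun h => ht h.1.symm, q.reverse,
      hp.1.reverse, by simpa using hxq, by simpa using hp.2⟩⟩

end EdgeOrder

section Stars

variable {D : Type*} [PartialOrder D] {star : D → D} {S : Set D} {F : Set (Set D)}
variable {V : Type*} {T : SimpleGraph V} {α : V → V → D} {x y : V}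

lemma eq_star_of_lt_of_le_star {r s : D} (hnt : ¬TrivialIn star S r) (hs : s ∈ S)
    (hlt : r < s) (hle : r ≤ star s) : r = star s :=
  by_contra fun hne => hnt ⟨s, hs, hlt, lt_of_le_of_ne hle hne⟩

lemma alpha_le_alpha_of_adj_of_adj (hT : IsSTree star S T α) (hover : IsOver T α F)
    (hF : ∀ σ ∈ F, IsStarSet star σ) (hirr : Irredundant T α) {a b v : V}
    (hab : T.Adj a b) (hbv : T.Adj b v) (hav : a ≠ v) : α a b ≤ α b v := by
  rw [hT.2.2.2 v b hbv.symm]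
  exact (hF _ (hover b)).2 _ ⟨a, hab, rfl⟩ _ ⟨v, hbv.symm, rfl⟩
    (hirr b a v hab hbv.symm hav)

lemma orderRespecting_of_isOver (hT : IsSTree star S T α) (hover : IsOver T α F)
    (hF : ∀ σ ∈ F, IsStarSet star σ) (hirr : Irredundant T α) : OrderRespecting T α := by
  rintro ⟨a, b⟩ ⟨c, d⟩ hab hcd (h | h)
  · rw [h]
  · exact edgeLT_induction (fun c d => α a b ≤ α c d)
      (fun _ _ _ h₁ h₂ hne hle =>
        hle.trans (alpha_le_alpha_of_adj_of_adj hT hover hF hirr h₁ h₂ hne))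
      hab hcd h le_rfl

def AboveRoot (star : D → D) (T : SimpleGraph V) (α : V → V → D) (x y : V) : Prop :=
  ∀ c v : V, T.Adj c v → edgeLE T (x, y) (c, v) →
    (c, v) = (x, y) ∨ (α x y < α c v ∧ α c v ≠ star (α x y))

lemma aboveRoot_of_tight (hinv : ∀ s : D, star (star s) = s)
    (hrev : ∀ r s : D, r ≤ s ↔ star s ≤ star r)
    (hT : IsSTree star S T α) (hover : IsOver T α F) (hF : ∀ σ ∈ F, IsStarSet star σ)
    (htight : Tight star T α) (hirr : Irredundant T α) (hxy : T.Adj x y)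
    (hnt : ¬TrivialIn star S (α x y)) (hnd : star (α x y) ≠ α x y) :
    AboveRoot star T α x y := by
  have hle : ∀ {a b w : V}, T.Adj a b → T.Adj b w → a ≠ w → α a b ≤ α b w :=
    alpha_le_alpha_of_adj_of_adj hT hover hF hirr
  rintro c v hcv (h | h)
  · exact Or.inl h.symm
  refine edgeLT_induction
    (fun c v => (c, v) = (x, y) ∨ (α x y < α c v ∧ α c v ≠ star (α x y))) ?_ hxy hcv h
    (Or.inl rfl)
  rintro a b w hab hbw haw (hroot | ⟨hlt, hne⟩) <;> right
  · obtain ⟨rfl, rfl⟩ := Prod.mk.inj hroot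
    have hwa : α w b = star (α b w) := hT.2.2.2 b w hbw
    refine ⟨lt_of_le_of_ne (hle hab hbw haw) fun heq => ?_, fun heq => ?_⟩
    · exact htight b _ ⟨a, hab, rfl⟩ hnd ⟨w, hbw.symm, by rw [hwa, heq]⟩
    · exact hirr b a w hab hbw.symm haw (by rw [hwa, heq, hinv])
  · refine ⟨hlt.trans_le (hle hab hbw haw), fun heq => hne ?_⟩
    -- `α a b ≤ α b w = r*` makes `r` lie below both orientations of `α a b`
    have hr : α x y = star (α a b) := eq_star_of_lt_of_le_star hnt (hT.2.2.1 a b hab) hlt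
      (by rw [hrev, hinv, ← heq]; exact hle hab hbw haw)
    rw [hr, hinv]

lemma AboveRoot.le_and_ne_star (hup : AboveRoot star T α x y) (hnd : star (α x y) ≠ α x y)
    {a b : V} (hab : T.Adj a b) (h : edgeLE T (x, y) (a, b)) :
    α x y ≤ α a b ∧ α a b ≠ star (α x y) := by
  rcases hup a b hab h with h | h
  · obtain ⟨rfl, rfl⟩ := Prod.mk.inj h
    exact ⟨le_rfl, hnd.symm⟩
  · exact ⟨h.1.le, h.2⟩

end Stars

section Shift

variable {U : Type*} [Lattice U] {star : U → U} {S : Set U} {F : Set (Set U)}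
variable {V : Type*} {T : SimpleGraph V} {α : V → V → U} {x y : V} {s0 : U}

lemma star_sup (hinv : ∀ s : U, star (star s) = s)
    (hrev : ∀ r s : U, r ≤ s ↔ star s ≤ star r) (a b : U) :
    star (a ⊔ b) = star a ⊓ star b := by
  refine le_antisymm (le_inf ((hrev _ _).1 le_sup_left) ((hrev _ _).1 le_sup_right)) ?_
  rw [hrev, hinv]
  exact sup_le ((hrev _ _).2 (by rw [hinv]; exact inf_le_left))
    ((hrev _ _).2 (by rw [hinv]; exact inf_le_right))

lemma shiftAlpha_of_edgeLE {a b : V} (h : edgeLE T (x, y) (a, b)) :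
    shiftAlpha star T x y s0 α a b = α a b ⊔ s0 :=
  if_pos h

lemma shiftAlpha_of_not_edgeLE {a b : V} (h : ¬edgeLE T (x, y) (a, b)) :
    shiftAlpha star T x y s0 α a b = star (α b a ⊔ s0) :=
  if_neg h

lemma shiftAlpha_eq_inf_of_not_edgeLE (hinv : ∀ s : U, star (star s) = s)
    (hrev : ∀ r s : U, r ≤ s ↔ star s ≤ star r) (hT : IsSTree star S T α) {a b : V}
    (hab : T.Adj a b) (h : ¬edgeLE T (x, y) (a, b)) :
    shiftAlpha star T x y s0 α a b = α a b ⊓ star s0 := by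
  rw [shiftAlpha_of_not_edgeLE h, star_sup hinv hrev, hT.2.2.2 a b hab, hinv]

lemma isSTree_shiftAlpha (hinv : ∀ s : U, star (star s) = s) (hSstar : ∀ s ∈ S, star s ∈ S)
    (hT : IsSTree star S T α) (hxy : T.Adj x y) (hleaf : ∀ z : V, T.Adj x z → z = y)
    (hup : AboveRoot star T α x y) (hnd : star (α x y) ≠ α x y)
    (hem : EmulatesIn star S (α x y) s0) : IsSTree star S T (shiftAlpha star T x y s0 α) := by
  obtain ⟨hconn, hac, hmem, -⟩ := hT
  have hswap := edgeLE_root_swap_iff hconn hac hxy hleaf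
  have hsup : ∀ a b, T.Adj a b → edgeLE T (x, y) (a, b) → α a b ⊔ s0 ∈ S :=
    fun a b hab h =>
    hem.2 _ (hmem a b hab) (hup.le_and_ne_star hnd hab h).2 (hup.le_and_ne_star hnd hab h).1
  refine ⟨hconn, hac, fun a b hab => ?_, fun a b hab => ?_⟩ <;>
    by_cases h : edgeLE T (x, y) (a, b)
  · rw [shiftAlpha_of_edgeLE h]
    exact hsup a b hab h
  · rw [shiftAlpha_of_not_edgeLE h]
    exact hSstar _ (hsup b a hab.symm ((hswap hab).2 h))
  · rw [shiftAlpha_of_edgeLE h, shiftAlpha_of_not_edgeLE ((hswap hab.symm).1 h)]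
  · rw [shiftAlpha_of_not_edgeLE h, shiftAlpha_of_edgeLE ((hswap hab).2 h), hinv]

lemma orderRespecting_shiftAlpha (hinv : ∀ s : U, star (star s) = s)
    (hrev : ∀ r s : U, r ≤ s ↔ star s ≤ star r) (hT : IsSTree star S T α)
    (hleaf : ∀ z : V, T.Adj x z → z = y) (horder : OrderRespecting T α) :
    OrderRespecting T (shiftAlpha star T x y s0 α) := by
  rintro ⟨a, b⟩ ⟨c, d⟩ hab hcd (h | h)
  · rw [h]
  have hle : α a b ≤ α c d := horder _ _ hab hcd (Or.inr h)
  by_cases hf : edgeLE T (x, y) (c, d)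
  · rw [shiftAlpha_of_edgeLE hf]
    by_cases he : edgeLE T (x, y) (a, b)
    · rw [shiftAlpha_of_edgeLE he]
      exact sup_le_sup_right hle s0
    · rw [shiftAlpha_eq_inf_of_not_edgeLE hinv hrev hT hab he]
      exact inf_le_left.trans (hle.trans le_sup_left)
  · have he : ¬edgeLE T (x, y) (a, b) := fun he =>
      hf (edgeLE_root_of_edgeLT hT.2.1 hleaf hab hcd he h)
    rw [shiftAlpha_eq_inf_of_not_edgeLE hinv hrev hT hab he,
      shiftAlpha_eq_inf_of_not_edgeLE hinv hrev hT hcd hf]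
    exact inf_le_inf_right _ hle

lemma starAt_shiftAlpha_root (hac : T.IsAcyclic) (hxy : T.Adj x y)
    (hleaf : ∀ z : V, T.Adj x z → z = y) (hr : α x y ≤ s0) :
    starAt T (shiftAlpha star T x y s0 α) x = {star s0} := by
  have hyx : shiftAlpha star T x y s0 α y x = star s0 := by
    rw [shiftAlpha_of_not_edgeLE fun h => not_edgeLE_root_and_swap hac hxy hxy (Or.inl rfl) h,
      sup_eq_right.2 hr]
  ext d
  constructor
  · rintro ⟨u, hux, rfl⟩
    obtain rfl := hleaf u hux.symm
    exact hyx
  · rintro rfl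
    exact ⟨y, hxy.symm, hyx⟩

lemma shiftAlpha_eq_shiftFun (hinv : ∀ s : U, star (star s) = s) (hT : IsSTree star S T α)
    (hxy : T.Adj x y) (hleaf : ∀ z : V, T.Adj x z → z = y) (hup : AboveRoot star T α x y)
    (hnt : ¬TrivialIn star S (α x y)) (hnd : star (α x y) ≠ α x y) {u t : V}
    (hut : T.Adj u t) (ht : t ≠ x) :
    shiftAlpha star T x y s0 α u t = shiftFun star (α x y) s0 (α u t) := by
  by_cases h : edgeLE T (x, y) (u, t)
  · rw [shiftAlpha_of_edgeLE h, shiftFun, if_pos (hup.le_and_ne_star hnd hut h)]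
  have hswap : α u t = star (α t u) := hT.2.2.2 t u hut.symm
  obtain ⟨hlt, hne⟩ := (hup t u hut.symm ((edgeLE_root_swap_iff hT.1 hT.2.1 hxy hleaf hut).2 h)
    ).resolve_left fun h => ht (Prod.mk.inj h).1
  have hdown : ¬(α x y ≤ α u t ∧ α u t ≠ star (α x y)) := by
    rintro ⟨hle, -⟩
    rw [hswap] at hle
    have hr := eq_star_of_lt_of_le_star hnt (hT.2.2.1 t u hut.symm) hlt hle
    exact hne (by rw [hr, hinv])
  rw [shiftAlpha_of_not_edgeLE h, shiftFun, if_neg hdown, hswap, hinv]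

lemma starAt_shiftAlpha_eq_image (hinv : ∀ s : U, star (star s) = s) (hT : IsSTree star S T α)
    (hxy : T.Adj x y) (hleaf : ∀ z : V, T.Adj x z → z = y) (hup : AboveRoot star T α x y)
    (hnt : ¬TrivialIn star S (α x y)) (hnd : star (α x y) ≠ α x y) {t : V} (ht : t ≠ x) :
    starAt T (shiftAlpha star T x y s0 α) t = shiftFun star (α x y) s0 '' starAt T α t := by
  ext d
  constructor
  · rintro ⟨u, hut, rfl⟩
    exact ⟨α u t, ⟨u, hut, rfl⟩,
      (shiftAlpha_eq_shiftFun hinv hT hxy hleaf hup hnt hnd hut ht).symm⟩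
  · rintro ⟨-, ⟨u, hut, rfl⟩, rfl⟩
    exact ⟨u, hut, shiftAlpha_eq_shiftFun hinv hT hxy hleaf hup hnt hnd hut ht⟩

lemma starAt_shiftAlpha_mem (hinv : ∀ s : U, star (star s) = s) (hT : IsSTree star S T α)
    (hover : IsOver T α F) (hxy : T.Adj x y) (hleaf : ∀ z : V, T.Adj x z → z = y)
    (hup : AboveRoot star T α x y) (hnt : ¬TrivialIn star S (α x y))
    (hnd : star (α x y) ≠ α x y) (hem : EmulatesFor star S F (α x y) s0) {t : V}
    (ht : t ≠ x) :
    starAt T (shiftAlpha star T x y s0 α) t ∈ F := by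
  rw [starAt_shiftAlpha_eq_image hinv hT hxy hleaf hup hnt hnd ht]
  refine hem.2 _ (hover t) ?_ ?_
  · rintro _ ⟨u, hut, rfl⟩
    by_cases h : edgeLE T (x, y) (u, t)
    · obtain ⟨hle, hne⟩ := hup.le_and_ne_star hnd hut h
      exact ⟨⟨hT.2.2.1 u t hut, Or.inl hle⟩, hne⟩
    have hswap : α u t = star (α t u) := hT.2.2.2 t u hut.symm
    obtain ⟨hlt, -⟩ := (hup t u hut.symm ((edgeLE_root_swap_iff hT.1 hT.2.1 hxy hleaf hut).2 h)
      ).resolve_left fun h => ht (Prod.mk.inj h).1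
    refine ⟨⟨hT.2.2.1 u t hut, Or.inr (by rw [hswap, hinv]; exact hlt.le)⟩,
      fun heq => hlt.ne' ?_⟩
    rw [← hinv (α t u), ← hswap, Set.mem_singleton_iff.mp heq, hinv]
  · obtain ⟨u, hut, h⟩ := exists_edgeLE_root_into hT.1 hxy hleaf ht
    exact ⟨α u t, ⟨u, hut, rfl⟩, (hup.le_and_ne_star hnd hut h).1⟩

lemma starAt_shiftAlpha_ne_singleton (hinv : ∀ s : U, star (star s) = s)
    (hrev : ∀ r s : U, r ≤ s ↔ star s ≤ star r) (hF : ∀ σ ∈ F, IsStarSet star σ)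
    (hT : IsSTree star S T α) (hxy : T.Adj x y) (hleaf : ∀ z : V, T.Adj x z → z = y)
    (hup : AboveRoot star T α x y) (hnt : ¬TrivialIn star S (α x y)) (hr : α x y ≤ s0)
    {t : V} (ht : t ≠ x) (hFt : starAt T (shiftAlpha star T x y s0 α) t ∈ F) :
    starAt T (shiftAlpha star T x y s0 α) t ≠ {star s0} := by
  intro heq
  obtain ⟨u, hut, h⟩ := exists_edgeLE_root_into hT.1 hxy hleaf ht
  have hu : α u t ⊔ s0 = star s0 := by
    have hmem : shiftAlpha star T x y s0 α u t ∈ starAt T (shiftAlpha star T x y s0 α) t :=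
      ⟨u, hut, rfl⟩
    rwa [heq, shiftAlpha_of_edgeLE h] at hmem
  have hs0 : star s0 ≠ s0 := by
    have hFs : ({star s0} : Set U) ∈ F := heq ▸ hFt
    have hnd0 := (hF _ hFs).1 (star s0) rfl
    rw [hinv] at hnd0
    exact hnd0.symm
  rcases hup u t hut h with hroot | ⟨hlt, hne⟩
  · obtain ⟨rfl, rfl⟩ := Prod.mk.inj hroot
    exact hs0 (by rw [← hu, sup_eq_right.2 hr])
  · have hle : s0 ≤ star (α u t) := by
      rw [hrev, hinv, ← hu]
      exact le_sup_left
    have hr' := eq_star_of_lt_of_le_star hnt (hT.2.2.1 u t hut) hlt (hr.trans hle)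
    exact hne (by rw [hr', hinv])

end Shift

theorem shift_STree_over_general {U : Type*} [Lattice U] (star : U → U)
    (hinv : ∀ s : U, star (star s) = s)
    (hrev : ∀ r s : U, r ≤ s ↔ star s ≤ star r)
    (S : Set U) (hSstar : ∀ s ∈ S, star s ∈ S)
    (F : Set (Set U)) (hF : ∀ σ ∈ F, IsStarSet star σ)
    {V : Type} (T : SimpleGraph V) (α : V → V → U)
    (hT : IsSTree star S T α) (hover : IsOver T α F)
    (htight : Tight star T α) (hirr : Irredundant T α)
    (x y : V) (hxy : T.Adj x y) (hleaf : ∀ z : V, T.Adj x z → z = y)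
    (hnt : ¬TrivialIn star S (α x y)) (hnd : star (α x y) ≠ α x y)
    (s0 : U) (hem : EmulatesFor star S F (α x y) s0) :
    IsSTree star S T (shiftAlpha star T x y s0 α) ∧
      OrderRespecting T (shiftAlpha star T x y s0 α) ∧
      IsOver T (shiftAlpha star T x y s0 α) (F ∪ {({star s0} : Set U)}) ∧
      starAt T (shiftAlpha star T x y s0 α) x = {star s0} ∧
      ∀ ℓ : V, IsLeaf T ℓ → ℓ ≠ x →
        starAt T (shiftAlpha star T x y s0 α) ℓ ≠ {star s0} := by
  have hup := aboveRoot_of_tight hinv hrev hT hover hF htight hirr hxy hnt hnd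
  have hroot := starAt_shiftAlpha_root (α := α) (star := star) hT.2.1 hxy hleaf hem.1.1
  have hmem : ∀ t, t ≠ x → starAt T (shiftAlpha star T x y s0 α) t ∈ F := fun t ht =>
    starAt_shiftAlpha_mem hinv hT hover hxy hleaf hup hnt hnd hem ht
  refine ⟨isSTree_shiftAlpha hinv hSstar hT hxy hleaf hup hnd hem.1,
    orderRespecting_shiftAlpha hinv hrev hT hleaf (orderRespecting_of_isOver hT hover hF hirr),
    fun t => ?_, hroot, fun ℓ _ hℓ =>
      starAt_shiftAlpha_ne_singleton hinv hrev hF hT hxy hleaf hup hnt hem.1.1 hℓ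
        (hmem ℓ hℓ)⟩
  rcases eq_or_ne t x with rfl | ht
  · exact Or.inr hroot
  · exact Or.inl (hmem t ht)

/-- **Shifting an `S`-tree over `F`.** Let `(T, α)` be a tight irredundant `S`-tree over a
family `F` of stars, rooted at a leaf `x` (with unique neighbour `y`), with
`r := α(e_x→)` nontrivial and nondegenerate, and let `s0` emulate `r` in `S→` for `F`.
Then `(T, α_{x,s0})` is an order-respecting `S`-tree over `F ∪ {{s0*}}`, in which the
star `{s0*}` is associated with `x` but with no other leaf of `T`. -/
theorem shift_STree_over {U : Type*} [Lattice U] (star : U → U)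
    (hinv : ∀ s : U, star (star s) = s)
    (hrev : ∀ r s : U, r ≤ s ↔ star s ≤ star r)
    (S : Set U) (hSstar : ∀ s ∈ S, star s ∈ S)
    (F : Set (Set U)) (hF : ∀ σ ∈ F, IsStarSet star σ)
    {V : Type} [Fintype V] (T : SimpleGraph V) (α : V → V → U)
    (hT : IsSTree star S T α) (hover : IsOver T α F)
    (htight : Tight star T α) (hirr : Irredundant T α)
    (x y : V) (hxy : T.Adj x y) (hleaf : ∀ z : V, T.Adj x z → z = y)
    (hnt : ¬TrivialIn star S (α x y)) (hnd : star (α x y) ≠ α x y)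
    (s0 : U) (hs0S : s0 ∈ S) (hem : EmulatesFor star S F (α x y) s0) :
    IsSTree star S T (shiftAlpha star T x y s0 α) ∧
      OrderRespecting T (shiftAlpha star T x y s0 α) ∧
      IsOver T (shiftAlpha star T x y s0 α) (F ∪ {({star s0} : Set U)}) ∧
      starAt T (shiftAlpha star T x y s0 α) x = {star s0} ∧
      ∀ ℓ : V, IsLeaf T ℓ → ℓ ≠ x →
        starAt T (shiftAlpha star T x y s0 α) ℓ ≠ {star s0} :=
  shift_STree_over_general star hinv hrev S hSstar F hF T α hT hover htight hirr x y hxy hleaf hnt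
    hnd s0 hem

end SepDuality
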